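/- Fix K ≥ 2 arms with mean rewards μ : {1,…,K} → ℝ and let Δ_k = |max_{i≠k} μ_i − μ_k|. Let U, L : {1,…,K} → ℝ satisfy L_i ≤ μ_i ≤ U_i for all arms i; set s_k = U_k − L_k and B_k = max_{i≠k} U_i − L_k. Let J be an arm with B_J ≤ B_k for all k, let j ≠ J be an arm with U_j ≥ U_i for all i ≠ J, and let a ∈ {j, J} be an arm with s_a = max(s_j, s_J). Then B_J ≤ min(0, s_a − Δ_a) + s_a. -/

import Mathlib

open Finset

/-- With at least two arms, the set of arms other than `k` is nonempty. -/
lemma eraseNe {K : ℕ} (hK : 2 ≤ K) (k : Fin K) :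
    ((univ : Finset (Fin K)).erase k).Nonempty := by
  apply card_pos.mp
  rw [card_erase_of_mem (mem_univ k), card_univ, Fintype.card_fin]
  omega

/-- The maximum of `f` over all arms other than `k`. -/
noncomputable def maxOther {K : ℕ} (hK : 2 ≤ K) (f : Fin K → ℝ) (k : Fin K) : ℝ :=
  ((univ : Finset (Fin K)).erase k).sup' (eraseNe hK k) f

/-- The gap index `B_k = max_{i ≠ k} U_i − L_k`. -/
noncomputable def gapB {K : ℕ} (hK : 2 ≤ K) (U L : Fin K → ℝ) (k : Fin K) : ℝ :=
  maxOther hK U k - L k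

/-! Since `j` is the best arm other than `J`, `B_J = U_j − L_J`, and a case split
on which of `U_j`, `U_J` is larger gives `B_J + B_j ≤ 2 max(s_j, s_J)`; as `B_J ≤ B_j`, also
`B_J ≤ s_a`. On the event `E`, the gap of any arm `k` is at most `max(B_k, B_i)` for every other
arm `i`, so `Δ_a ≤ B_j` and hence `B_J + Δ_a ≤ 2 s_a`. -/

section maxOther

variable {K : ℕ} (hK : 2 ≤ K)

lemma le_maxOther (f : Fin K → ℝ) {i k : Fin K} (h : i ≠ k) : f i ≤ maxOther hK f k :=
  le_sup' f (by simp [h])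

lemma maxOther_le (f : Fin K → ℝ) {k : Fin K} {c : ℝ} (h : ∀ i, i ≠ k → f i ≤ c) :
    maxOther hK f k ≤ c :=
  sup'_le _ _ fun i hi => h i (mem_erase.mp hi).1

lemma maxOther_mono {f g : Fin K → ℝ} (h : ∀ i, f i ≤ g i) (k : Fin K) :
    maxOther hK f k ≤ maxOther hK g k :=
  maxOther_le hK f fun _ hi => (h _).trans (le_maxOther hK g hi)

lemma maxOther_eq_of_forall_le (f : Fin K → ℝ) {j k : Fin K} (hjk : j ≠ k)
    (hj : ∀ i, i ≠ k → f i ≤ f j) : maxOther hK f k = f j :=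
  (maxOther_le hK f hj).antisymm (le_maxOther hK f hjk)

lemma maxOther_le_max_of_forall_le (f : Fin K → ℝ) {j k : Fin K}
    (hj : ∀ i, i ≠ k → f i ≤ f j) (l : Fin K) : maxOther hK f l ≤ max (f k) (f j) := by
  refine maxOther_le hK f fun i _ => ?_
  by_cases hik : i = k
  · exact hik ▸ le_max_left _ _
  · exact (hj i hik).trans (le_max_right _ _)

end maxOther

section gapB

variable {K : ℕ} (hK : 2 ≤ K) {U L : Fin K → ℝ}

lemma sub_le_gapB {i k : Fin K} (hik : i ≠ k) : U i - L k ≤ gapB hK U L k :=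
  sub_le_sub_right (le_maxOther hK U hik) _

lemma abs_maxOther_sub_le_max_gapB {μ : Fin K → ℝ} (hE : ∀ i, L i ≤ μ i ∧ μ i ≤ U i)
    {i k : Fin K} (hik : i ≠ k) :
    |maxOther hK μ k - μ k| ≤ max (gapB hK U L k) (gapB hK U L i) := by
  rw [abs_sub_le_iff]
  constructor
  · calc maxOther hK μ k - μ k ≤ maxOther hK U k - L k :=
          sub_le_sub (maxOther_mono hK (fun i => (hE i).2) k) (hE k).1
      _ ≤ _ := le_max_left _ _
  · calc μ k - maxOther hK μ k ≤ U k - L i :=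
          sub_le_sub (hE k).2 ((hE i).1.trans (le_maxOther hK μ hik))
      _ ≤ gapB hK U L i := sub_le_gapB hK hik.symm
      _ ≤ _ := le_max_right _ _

lemma gapB_add_gapB_runnerUp_le {J j : Fin K} (hjJ : j ≠ J) (hj : ∀ i, i ≠ J → U i ≤ U j)
    (hJ : gapB hK U L J ≤ gapB hK U L j) :
    gapB hK U L J + gapB hK U L j ≤ 2 * max (U j - L j) (U J - L J) := by
  have hBJ : gapB hK U L J = U j - L J := by
    rw [gapB, maxOther_eq_of_forall_le hK U hjJ hj]
  have hBj : gapB hK U L j ≤ max (U J) (U j) - L j :=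
    sub_le_sub_right (maxOther_le_max_of_forall_le hK U hj j) _
  have hsj := le_max_left (U j - L j) (U J - L J)
  have hsJ := le_max_right (U j - L j) (U J - L J)
  rcases le_total (U J) (U j) with h | h
  · rw [max_eq_right h] at hBj
    linarith
  · rw [max_eq_left h] at hBj
    linarith

end gapB

/-- Lemma A4: on the event that all bounds hold, if `J` minimizes the gap index,
`j ≠ J` is the best runner-up, and the pulled arm `a ∈ {j, J}` has the larger
confidence diameter `s_a = max(s_j, s_J)` (with `s_k = U_k − L_k`), then
`B_J ≤ min(0, s_a − Δ_a) + s_a`, where `Δ_k = |max_{i ≠ k} μ_i − μ_k|`. -/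
theorem min_gap_le_min_zero_add_uncertainty {K : ℕ} (hK : 2 ≤ K)
    (μ U L : Fin K → ℝ)
    (hE : ∀ i, L i ≤ μ i ∧ μ i ≤ U i)
    (J j a : Fin K)
    (hJ : ∀ k, gapB hK U L J ≤ gapB hK U L k)
    (hjJ : j ≠ J) (hj : ∀ i, i ≠ J → U i ≤ U j)
    (haMem : a = j ∨ a = J)
    (haMax : U a - L a = max (U j - L j) (U J - L J)) :
    gapB hK U L J ≤
      min 0 ((U a - L a) - |maxOther hK μ a - μ a|) + (U a - L a) := by
  have hsum := gapB_add_gapB_runnerUp_le hK hjJ hj (hJ j)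
  have hΔ : |maxOther hK μ a - μ a| ≤ gapB hK U L j := by
    rcases haMem with rfl | rfl
    · exact (abs_maxOther_sub_le_max_gapB hK hE hjJ.symm).trans (max_le le_rfl (hJ a))
    · exact (abs_maxOther_sub_le_max_gapB hK hE hjJ).trans (max_le (hJ j) le_rfl)
  rw [← min_add_add_right, zero_add]
  exact le_min (by linarith [hJ j]) (by linarith)
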